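/- Let i ≠ j be distinct computational basis bit strings of length m, d_B = 2^m, and Q_B = (1/d_B²) Σ_{P ∈ 𝒫_m} P^{⊗4}. Then ⟨iijj| Q_B T_ρ |iijj⟩ = 1/d_B if ρ lies in the order-8 subgroup ⟨(1324), (12)⟩ of S_4, and equals 0 otherwise. -/
import Mathlib


open Matrix BigOperators
open scoped Classical

/-- Tensor power of a matrix: `O^{⊗k}` acting on `ι^k`. -/
noncomputable def tensorPow {ι : Type} [Fintype ι] (O : Matrix ι ι ℂ) (k : ℕ) :
    Matrix (Fin k → ι) (Fin k → ι) ℂ :=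
  fun x y => ∏ i, O (x i) (y i)

/-- Permutation operator `T_ρ` on `H^{⊗k}`: `T_ρ (v_1 ⊗ ⋯ ⊗ v_k) = v_{ρ⁻¹(1)} ⊗ ⋯`. -/
noncomputable def permOp (ι : Type) [Fintype ι] {k : ℕ} (ρ : Equiv.Perm (Fin k)) :
    Matrix (Fin k → ι) (Fin k → ι) ℂ :=
  fun x y => if x = y ∘ ρ.symm then 1 else 0

/-- Unnormalized projector onto symmetric subspace. -/
noncomputable def symProj (ι : Type) [Fintype ι] (k : ℕ) :
    Matrix (Fin k → ι) (Fin k → ι) ℂ :=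
  ∑ ρ : Equiv.Perm (Fin k), permOp ι ρ

/-- Single-qubit Pauli matrices I, X, Y, Z. -/
noncomputable def pauli : Fin 4 → Matrix (Fin 2) (Fin 2) ℂ
  | 0 => 1
  | 1 => !![0, 1; 1, 0]
  | 2 => !![0, -Complex.I; Complex.I, 0]
  | 3 => !![1, 0; 0, -1]

/-- Pauli string `P_{s 0} ⊗ ⋯ ⊗ P_{s (n-1)}` on `n` qubits. -/
noncomputable def pauliString {n : ℕ} (s : Fin n → Fin 4) :
    Matrix (Fin n → Fin 2) (Fin n → Fin 2) ℂ :=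
  fun x y => ∏ i, pauli (s i) (x i) (y i)

/-- `Q = (1/d²) Σ_P P^{⊗4}` on `(ℂ^d)^{⊗4}`, `d = 2^n`. -/
noncomputable def Qop (n : ℕ) :
    Matrix (Fin 4 → (Fin n → Fin 2)) (Fin 4 → (Fin n → Fin 2)) ℂ :=
  (((2 : ℂ) ^ n) ^ 2)⁻¹ • ∑ s : Fin n → Fin 4, tensorPow (pauliString s) 4

/-! ### Auxiliary material -/

set_option maxRecDepth 10000

/-- Integer (Gaussian-integer) version of the Pauli matrices. -/
def pauliZ : Fin 4 → Fin 2 → Fin 2 → GaussianInt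
  | 0, x, y => if x = y then 1 else 0
  | 1, x, y => if x = y then 0 else 1
  | 2, x, y => if x = y then 0 else if x = 0 then ⟨0, -1⟩ else ⟨0, 1⟩
  | 3, x, y => if x = y then (if x = 0 then 1 else -1) else 0

lemma pauli_eq_pauliZ (t : Fin 4) (x y : Fin 2) :
    pauli t x y = GaussianInt.toComplex (pauliZ t x y) := by
  fin_cases t <;> fin_cases x <;> fin_cases y <;>
    simp [pauli, pauliZ, GaussianInt.toComplex_def, Matrix.one_apply]

/-- The predicate cutting out the order-8 subgroup: `ρ 0` and `ρ 1` lie in the same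
block of the partition `{{0,1},{2,3}}`. -/
def predH (ρ : Equiv.Perm (Fin 4)) : Prop := (ρ 0).val / 2 = (ρ 1).val / 2

instance : DecidablePred predH := fun ρ => by unfold predH; infer_instance

lemma predH_mul : ∀ α β : Equiv.Perm (Fin 4), predH α → predH β → predH (α * β) := by decide

lemma predH_one : predH 1 := by decide

lemma predH_inv : ∀ α : Equiv.Perm (Fin 4), predH α → predH α⁻¹ := by decide

/-- The explicit subgroup given by `predH`. -/
def Hsub : Subgroup (Equiv.Perm (Fin 4)) where
  carrier := {ρ | predH ρ}
  mul_mem' := fun ha hb => predH_mul _ _ ha hb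
  one_mem' := predH_one
  inv_mem' := fun ha => predH_inv _ ha

lemma predH_g : predH c[(0 : Fin 4), 2, 1, 3] := by decide

lemma predH_t : predH (Equiv.swap (0 : Fin 4) 1) := by decide

lemma predH_enum (g t : Equiv.Perm (Fin 4)) (hg : g = c[(0 : Fin 4), 2, 1, 3])
    (ht : t = Equiv.swap 0 1) : ∀ σ : Equiv.Perm (Fin 4), predH σ →
    σ = 1 ∨ σ = g ∨ σ = g*g ∨ σ = g*g*g
    ∨ σ = t ∨ σ = g*t ∨ σ = g*g*t ∨ σ = g*g*g*t := by
  subst hg ht; decide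

lemma mem_closure_iff_predH (ρ : Equiv.Perm (Fin 4)) :
    ρ ∈ Subgroup.closure
        ({c[(0 : Fin 4), 2, 1, 3], Equiv.swap (0 : Fin 4) 1} :
          Set (Equiv.Perm (Fin 4))) ↔ predH ρ := by
  set g : Equiv.Perm (Fin 4) := c[(0 : Fin 4), 2, 1, 3] with hg
  set t : Equiv.Perm (Fin 4) := Equiv.swap (0 : Fin 4) 1 with ht
  constructor
  · intro h
    have hle : Subgroup.closure ({g, t} : Set (Equiv.Perm (Fin 4))) ≤ Hsub := by
      rw [Subgroup.closure_le]
      intro x hx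
      rcases hx with h1 | h2
      · subst h1; exact predH_g
      · simp only [Set.mem_singleton_iff] at h2; subst h2; exact predH_t
    exact hle h
  · intro h
    have hgm : g ∈ Subgroup.closure ({g, t} : Set (Equiv.Perm (Fin 4))) :=
      Subgroup.subset_closure (by simp)
    have htm : t ∈ Subgroup.closure ({g, t} : Set (Equiv.Perm (Fin 4))) :=
      Subgroup.subset_closure (by simp)
    rcases predH_enum g t hg ht ρ h with h'|h'|h'|h'|h'|h'|h'|h'
    · rw [h']; exact Subgroup.one_mem _
    · rw [h']; exact hgm
    · rw [h']; exact Subgroup.mul_mem _ hgm hgm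
    · rw [h']; exact Subgroup.mul_mem _ (Subgroup.mul_mem _ hgm hgm) hgm
    · rw [h']; exact htm
    · rw [h']; exact Subgroup.mul_mem _ hgm htm
    · rw [h']; exact Subgroup.mul_mem _ (Subgroup.mul_mem _ hgm hgm) htm
    · rw [h']; exact Subgroup.mul_mem _ (Subgroup.mul_mem _ (Subgroup.mul_mem _ hgm hgm) hgm) htm

/-- Integer version of the single-qubit factor of the matrix element. -/
def fZ (ρ : Equiv.Perm (Fin 4)) (a b : Fin 2) : GaussianInt :=
  ∑ t : Fin 4, ∏ α : Fin 4, pauliZ t (![a, a, b, b] α) (![a, a, b, b] (ρ.symm α))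

lemma fZ_eq : ∀ (ρ : Equiv.Perm (Fin 4)) (a b : Fin 2),
    fZ ρ a b = if a = b ∨ predH ρ then 2 else 0 := by decide

/-- Complex version of the single-qubit factor. -/
noncomputable def fC (ρ : Equiv.Perm (Fin 4)) (a b : Fin 2) : ℂ :=
  ∑ t : Fin 4, ∏ α : Fin 4, pauli t (![a, a, b, b] α) (![a, a, b, b] (ρ.symm α))

lemma fC_eq (ρ : Equiv.Perm (Fin 4)) (a b : Fin 2) :
    fC ρ a b = if a = b ∨ predH ρ then 2 else 0 := by
  have : fC ρ a b = GaussianInt.toComplex (fZ ρ a b) := by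
    rw [fZ, map_sum]
    refine Finset.sum_congr rfl fun t _ => ?_
    rw [map_prod]
    exact Finset.prod_congr rfl fun α _ => pauli_eq_pauliZ _ _ _
  rw [this, fZ_eq]
  split <;> simp [GaussianInt.toComplex_def]

/-- for `i ≠ j`, `⟨iijj| Q_B T_ρ |iijj⟩ = 1/d_B` if
`ρ ∈ ⟨(1324),(12)⟩` and `0` otherwise. -/
theorem matElem_Qop_permOp (m : ℕ) (i j : Fin m → Fin 2) (hij : i ≠ j)
    (ρ : Equiv.Perm (Fin 4)) :
    (Qop m * permOp (Fin m → Fin 2) ρ) ![i, i, j, j] ![i, i, j, j] =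
      if ρ ∈ Subgroup.closure
          ({c[(0 : Fin 4), 2, 1, 3], Equiv.swap (0 : Fin 4) 1} :
            Set (Equiv.Perm (Fin 4)))
      then ((2 : ℂ) ^ m)⁻¹ else 0 := by
  classical
  set x : Fin 4 → (Fin m → Fin 2) := ![i, i, j, j] with hx
  -- Step 1: kill the matrix product using the permutation matrix.
  have h1 : (Qop m * permOp (Fin m → Fin 2) ρ) x x = Qop m x (x ∘ ρ.symm) := by
    rw [Matrix.mul_apply]
    rw [Finset.sum_eq_single (x ∘ ρ.symm)]
    · simp [permOp]
    · intro y _ hy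
      simp only [permOp, if_neg hy, mul_zero]
    · intro h; exact absurd (Finset.mem_univ _) h
  -- Step 2: factorize over qubits.
  have hxk : ∀ (α : Fin 4) (k : Fin m), x α k = ![i k, i k, j k, j k] α := by
    intro α k; fin_cases α <;> rfl
  have h2 : Qop m x (x ∘ ρ.symm) =
      (((2 : ℂ) ^ m) ^ 2)⁻¹ * ∏ k : Fin m, fC ρ (i k) (j k) := by
    rw [Qop, Matrix.smul_apply, Matrix.sum_apply, smul_eq_mul]
    congr 1
    have : ∀ s : Fin m → Fin 4, tensorPow (pauliString s) 4 x (x ∘ ρ.symm) =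
        ∏ k : Fin m, ∏ α : Fin 4, pauli (s k) (x α k) (x (ρ.symm α) k) := by
      intro s
      rw [tensorPow]
      simp only [pauliString, Function.comp_apply]
      rw [Finset.prod_comm]
    rw [Finset.sum_congr rfl fun s _ => this s]
    rw [show (Finset.univ : Finset (Fin m → Fin 4)) =
          Fintype.piFinset (fun _ => Finset.univ) from Fintype.piFinset_univ.symm,
      ← Finset.prod_univ_sum (fun _ => Finset.univ)
        (fun k t => ∏ α : Fin 4, pauli t (x α k) (x (ρ.symm α) k))]
    refine Finset.prod_congr rfl fun k _ => ?_
    rw [fC]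
    refine Finset.sum_congr rfl fun t _ => Finset.prod_congr rfl fun α _ => ?_
    rw [hxk α k, hxk (ρ.symm α) k]
  rw [h1, h2, mem_closure_iff_predH]
  by_cases hρ : predH ρ
  · rw [if_pos hρ]
    have : ∀ k : Fin m, fC ρ (i k) (j k) = 2 := fun k => by
      rw [fC_eq, if_pos (Or.inr hρ)]
    rw [Finset.prod_congr rfl fun k _ => this k, Finset.prod_const, Finset.card_univ,
      Fintype.card_fin]
    have h2m : (2 : ℂ) ^ m ≠ 0 := pow_ne_zero _ two_ne_zero
    field_simp
  · rw [if_neg hρ]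
    obtain ⟨k, hk⟩ := Function.ne_iff.mp hij
    have : fC ρ (i k) (j k) = 0 := by
      rw [fC_eq, if_neg]
      rintro (h | h)
      exacts [hk h, hρ h]
    rw [Finset.prod_eq_zero (Finset.mem_univ k) this, mul_zero]
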